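/- Let R be a UFD, let F, G ∈ R[[X₁,…,Xₙ]] be nonzero series whose v-initial parts F_v, G_v (for a fixed positive weight vector v) are coprime, have equal v-order ξ, and generate an ideal containing no monomial. Suppose A·F + B·G = ω + (higher order terms in v-grading) for some nonzero A, B ∈ R[[X₁,…,Xₙ]] and a monomial ω of v-degree t. Then the v-orders of A and B are both at least ξ, and 2ξ < t. -/

import Mathlib

/-- The `v`-weighted degree of an exponent `α`. -/
noncomputable def wdeg {n : ℕ} (v : Fin n → ℕ) (α : Fin n →₀ ℕ) : ℕ := ∑ i, v i * α i

/-- The `v`-order of a power series: the minimal `v`-weighted degree on its support. -/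
noncomputable def vord {n : ℕ} {R : Type*} [CommRing R] (v : Fin n → ℕ)
    (F : MvPowerSeries (Fin n) R) : ℕ :=
  sInf {w | ∃ α, MvPowerSeries.coeff α F ≠ 0 ∧ wdeg v α = w}

/-- The `v`-initial part of a power series: the sum of its terms of least `v`-weighted degree. -/
noncomputable def initPart {n : ℕ} {R : Type*} [CommRing R] (v : Fin n → ℕ)
    (F : MvPowerSeries (Fin n) R) : MvPowerSeries (Fin n) R :=
  fun α => if wdeg v α = vord v F then MvPowerSeries.coeff α F else 0

/-- A (nonzero) monomial `c·X^α`. -/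
def IsMon {n : ℕ} {R : Type*} [CommRing R] (F : MvPowerSeries (Fin n) R) : Prop :=
  ∃ (α : Fin n →₀ ℕ) (c : R), c ≠ 0 ∧ F = MvPowerSeries.monomial α c

/-!
Put `k = min (ord A) (ord B)` and let `x`, `y` be the degree-`k` components of `A`, `B`. The
degree-`(k + ξ)` component of `A F + B G` is `x F_v + y G_v`, an element of `(F_v, G_v)`. It must
vanish: otherwise it would be the initial part of `A F + B G`, a monomial in an ideal that has
none. Hence `ord (A F + B G) > k + ξ`.

With positive weights, weighted homogeneous series are polynomials, so `x F_v = -y G_v` holds in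
the UFD `R[X₁, …, Xₙ]`. Coprimality of `F_v, G_v` among power series passes to polynomials,
because a polynomial with unit constant term dividing a nonzero weighted homogeneous polynomial
is constant: the lowest and the highest weighted degrees are both additive. So `G_v ∣ x` and
`F_v ∣ y`, and whichever of `x, y` is nonzero has degree `k ≥ ξ`.
-/

namespace MvPowerSeries

variable {σ R : Type*} [CommSemiring R] {w : σ → ℕ} {f g : MvPowerSeries σ R}

theorem IsWeightedHomogeneous.weightedOrder_eq {p : ℕ} (hf : f.IsWeightedHomogeneous w p)
    (hf0 : f ≠ 0) : f.weightedOrder w = p := by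
  obtain ⟨d, hd⟩ := (ne_zero_iff_exists_coeff_ne_zero f).mp hf0
  exact (weightedOrder_eq_nat w).mpr ⟨⟨d, hd, hf hd⟩, fun e he => hf.coeff_eq_zero he.ne⟩

theorem weightedOrder_le_of_dvd (h : f ∣ g) : f.weightedOrder w ≤ g.weightedOrder w := by
  obtain ⟨c, rfl⟩ := h
  exact le_self_add.trans (le_weightedOrder_mul w)

theorem weightedOrder_eq_of_weightedHomogeneousComponent_ne_zero {m : ℕ}
    (hm : (m : ℕ∞) ≤ f.weightedOrder w) (h : weightedHomogeneousComponent w m f ≠ 0) :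
    f.weightedOrder w = m := by
  obtain ⟨d, hd⟩ := (ne_zero_iff_exists_coeff_ne_zero _).mp h
  rw [coeff_weightedHomogeneousComponent] at hd
  split_ifs at hd with hdm
  · exact le_antisymm (hdm ▸ weightedOrder_le w hd) hm
  · exact absurd rfl hd

theorem add_le_weightedOrder_mul_add_mul {a b : MvPowerSeries σ R} {k ξ : ℕ}
    (ha : (k : ℕ∞) ≤ a.weightedOrder w) (hb : (k : ℕ∞) ≤ b.weightedOrder w)
    (hf : (ξ : ℕ∞) ≤ f.weightedOrder w) (hg : (ξ : ℕ∞) ≤ g.weightedOrder w) :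
    ((k + ξ : ℕ) : ℕ∞) ≤ (a * f + b * g).weightedOrder w := by
  refine le_trans (le_min ?_ ?_) (min_weightedOrder_le_add w) <;>
    exact le_trans (by rw [Nat.cast_add]; gcongr) (le_weightedOrder_mul w)

theorem IsWeightedHomogeneous.exists_coe_eq [Finite σ] (hw : ∀ i, w i ≠ 0) {p : ℕ}
    (hf : f.IsWeightedHomogeneous w p) : ∃ P : MvPolynomial σ R, (P : MvPowerSeries σ R) = f := by
  classical
  refine ⟨truncFinset R (Finsupp.finite_of_nat_weight_le w hw p).toFinset f, ?_⟩
  ext d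
  rw [MvPolynomial.coeff_coe, coeff_truncFinset]
  split_ifs with h
  · rfl
  · exact (hf.coeff_eq_zero fun e => h (by simp [e])).symm

end MvPowerSeries

namespace MvPolynomial

variable {σ R : Type*} {w : σ → ℕ}

section CommSemiring

variable [CommSemiring R]

theorem isWeightedHomogeneous_coe_iff {p : MvPolynomial σ R} {m : ℕ} :
    (p : MvPowerSeries σ R).IsWeightedHomogeneous w m ↔ p.IsWeightedHomogeneous w m := by
  simp only [MvPowerSeries.IsWeightedHomogeneous, IsWeightedHomogeneous, coeff_coe]

theorem weightedOrder_coe_le_weightedTotalDegree {p : MvPolynomial σ R} (hp : p ≠ 0) :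
    (p : MvPowerSeries σ R).weightedOrder w ≤ p.weightedTotalDegree w := by
  obtain ⟨e, he⟩ := exists_coeff_ne_zero hp
  exact (MvPowerSeries.weightedOrder_le w (by rwa [coeff_coe])).trans
    (by exact_mod_cast le_weightedTotalDegree w (mem_support_iff.mpr he))

theorem coeff_eq_zero_of_weightedTotalDegree_lt {p : MvPolynomial σ R} {d : σ →₀ ℕ}
    (h : p.weightedTotalDegree w < Finsupp.weight w d) : coeff d p = 0 :=
  notMem_support_iff.mp fun hd => (le_weightedTotalDegree w hd).not_gt h

theorem weightedHomogeneousComponent_weightedTotalDegree_ne_zero {p : MvPolynomial σ R}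
    (hp : p ≠ 0) : weightedHomogeneousComponent w (p.weightedTotalDegree w) p ≠ 0 := by
  obtain ⟨d, hd, hdeg⟩ :=
    Finset.exists_mem_eq_sup p.support (support_nonempty.mpr hp) (Finsupp.weight w)
  intro h
  have := congr_arg (coeff d) h
  rw [coeff_weightedHomogeneousComponent, weightedTotalDegree, ← hdeg, if_pos rfl,
    coeff_zero] at this
  exact mem_support_iff.mp hd this

theorem weightedHomogeneousComponent_mul_weightedTotalDegree (p q : MvPolynomial σ R) :
    weightedHomogeneousComponent w (p.weightedTotalDegree w + q.weightedTotalDegree w) (p * q) =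
      weightedHomogeneousComponent w (p.weightedTotalDegree w) p *
        weightedHomogeneousComponent w (q.weightedTotalDegree w) q := by
  classical
  ext d
  rw [coeff_weightedHomogeneousComponent]
  split_ifs with hd
  · simp only [coeff_mul]
    refine Finset.sum_congr rfl fun x hx => ?_
    rw [Finset.HasAntidiagonal.mem_antidiagonal] at hx
    rw [← hx, map_add] at hd
    simp only [coeff_weightedHomogeneousComponent]
    rcases trichotomy_of_add_eq_add hd with h | h | h
    · rw [if_pos h.1, if_pos h.2]
    · rw [if_neg h.ne, zero_mul, coeff_eq_zero_of_weightedTotalDegree_lt (p := q) (w := w)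
        (by omega), mul_zero]
    · rw [if_neg h.ne, mul_zero, coeff_eq_zero_of_weightedTotalDegree_lt (p := p) (w := w)
        (by omega), zero_mul]
  · symm
    exact ((weightedHomogeneousComponent_isWeightedHomogeneous _ _).mul
      (weightedHomogeneousComponent_isWeightedHomogeneous _ _)).coeff_eq_zero _ hd

theorem add_weightedTotalDegree_le_weightedTotalDegree_mul [NoZeroDivisors R]
    {p q : MvPolynomial σ R} (hp : p ≠ 0) (hq : q ≠ 0) :
    p.weightedTotalDegree w + q.weightedTotalDegree w ≤ (p * q).weightedTotalDegree w := by
  by_contra! h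
  refine mul_ne_zero (weightedHomogeneousComponent_weightedTotalDegree_ne_zero (w := w) hp)
    (weightedHomogeneousComponent_weightedTotalDegree_ne_zero (w := w) hq) ?_
  rw [← weightedHomogeneousComponent_mul_weightedTotalDegree]
  exact weightedHomogeneousComponent_eq_zero _ _ h

theorem isUnit_of_dvd_of_isWeightedHomogeneous [IsDomain R] (hw : ∀ i, w i ≠ 0)
    {p d : MvPolynomial σ R} {m : ℕ} (hp : p.IsWeightedHomogeneous w m) (hp0 : p ≠ 0)
    (hdp : d ∣ p) (hd : IsUnit (coeff 0 d)) : IsUnit d := by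
  obtain ⟨q, rfl⟩ := hdp
  have hd0 : d ≠ 0 := left_ne_zero_of_mul hp0
  have hq0 : q ≠ 0 := right_ne_zero_of_mul hp0
  have htop : d.weightedTotalDegree w + q.weightedTotalDegree w ≤ m :=
    (add_weightedTotalDegree_le_weightedTotalDegree_mul hd0 hq0).trans
      (Finset.sup_le fun e he => (hp (mem_support_iff.mp he)).le)
  have hd_ord : (d : MvPowerSeries σ R).weightedOrder w = 0 := by
    simpa using MvPowerSeries.weightedOrder_le w (d := 0) (by rw [coeff_coe]; exact hd.ne_zero)
  have hbot : (m : ℕ∞) ≤ q.weightedTotalDegree w := by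
    rw [← MvPowerSeries.IsWeightedHomogeneous.weightedOrder_eq
      (isWeightedHomogeneous_coe_iff.mpr hp) (coe_eq_zero_iff.not.mpr hp0), coe_mul,
      MvPowerSeries.weightedOrder_mul, hd_ord, zero_add]
    exact weightedOrder_coe_le_weightedTotalDegree hq0
  have hd_hom : d.IsWeightedHomogeneous w 0 :=
    isWeightedHomogeneous_zero_iff_weightedTotalDegree_eq_zero.mpr
      (by have := Nat.cast_le.mp hbot; omega)
  rw [← hd_hom.weightedHomogeneousComponent_same, weightedHomogeneousComponent_zero _ hw]
  exact hd.map C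

end CommSemiring

theorem isRelPrime_of_isWeightedHomogeneous [CommRing R] [IsDomain R]
    (hw : ∀ i, w i ≠ 0) {p q : MvPolynomial σ R} {m : ℕ} (hp : p.IsWeightedHomogeneous w m)
    (hp0 : p ≠ 0) (h : ∀ D : MvPowerSeries σ R, D ∣ p → D ∣ q → IsUnit D) : IsRelPrime p q := by
  intro d hdp hdq
  refine isUnit_of_dvd_of_isWeightedHomogeneous hw hp hp0 hdp ?_
  have := MvPowerSeries.isUnit_iff_constantCoeff.mp
    (h d (map_dvd coeToMvPowerSeries.ringHom hdp) (map_dvd coeToMvPowerSeries.ringHom hdq))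
  rwa [← MvPowerSeries.coeff_zero_eq_constantCoeff_apply, coeff_coe] at this

end MvPolynomial

namespace MvPowerSeries

variable {σ R : Type*} [Finite σ] [CommRing R] [IsDomain R] [UniqueFactorizationMonoid R]
  {w : σ → ℕ}

theorem dvd_of_mul_add_mul_eq_zero (hw : ∀ i, w i ≠ 0) {f g x y : MvPowerSeries σ R}
    {p q r s : ℕ} (hf : f.IsWeightedHomogeneous w p) (hf0 : f ≠ 0)
    (hg : g.IsWeightedHomogeneous w q) (hx : x.IsWeightedHomogeneous w r)
    (hy : y.IsWeightedHomogeneous w s) (hcop : ∀ D, D ∣ f → D ∣ g → IsUnit D)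
    (h : x * f + y * g = 0) : g ∣ x := by
  obtain ⟨F, rfl⟩ := hf.exists_coe_eq hw
  obtain ⟨G, rfl⟩ := hg.exists_coe_eq hw
  obtain ⟨X, rfl⟩ := hx.exists_coe_eq hw
  obtain ⟨Y, rfl⟩ := hy.exists_coe_eq hw
  have hFG : IsRelPrime F G := MvPolynomial.isRelPrime_of_isWeightedHomogeneous hw
    (MvPolynomial.isWeightedHomogeneous_coe_iff.mp hf) (MvPolynomial.coe_eq_zero_iff.not.mp hf0)
    hcop
  have hXY : X * F + Y * G = 0 := MvPolynomial.coe_injective _ _ (by push_cast; exact h)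
  exact map_dvd MvPolynomial.coeToMvPowerSeries.ringHom
    (hFG.symm.dvd_of_dvd_mul_right ⟨-Y, by linear_combination hXY⟩)

theorem le_of_mul_add_mul_eq_zero (hw : ∀ i, w i ≠ 0) {f g x y : MvPowerSeries σ R}
    {ξ k : ℕ} (hf : f.IsWeightedHomogeneous w ξ) (hf0 : f ≠ 0)
    (hg : g.IsWeightedHomogeneous w ξ) (hg0 : g ≠ 0) (hx : x.IsWeightedHomogeneous w k)
    (hx0 : x ≠ 0) (hy : y.IsWeightedHomogeneous w k) (hcop : ∀ D, D ∣ f → D ∣ g → IsUnit D)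
    (h : x * f + y * g = 0) : ξ ≤ k := by
  have hgx : g.weightedOrder w ≤ x.weightedOrder w :=
    weightedOrder_le_of_dvd (dvd_of_mul_add_mul_eq_zero hw hf hf0 hg hx hy hcop h)
  rwa [IsWeightedHomogeneous.weightedOrder_eq hg hg0,
    IsWeightedHomogeneous.weightedOrder_eq hx hx0, Nat.cast_le] at hgx

theorem le_weightedOrder_of_weightedHomogeneousComponent_notMem_span (hw : ∀ i, w i ≠ 0)
    {f g a b : MvPowerSeries σ R} {ξ : ℕ} (hf : f.weightedOrder w = ξ)
    (hg : g.weightedOrder w = ξ) (ha : a ≠ 0)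
    (hcop : ∀ D, D ∣ weightedHomogeneousComponent w ξ f →
      D ∣ weightedHomogeneousComponent w ξ g → IsUnit D)
    (hS : ∀ m : ℕ, (a * f + b * g).weightedOrder w = m →
      weightedHomogeneousComponent w m (a * f + b * g) ∉
        Ideal.span {weightedHomogeneousComponent w ξ f, weightedHomogeneousComponent w ξ g}) :
    ξ ≤ a.weightedOrder w ∧ ξ ≤ b.weightedOrder w ∧ 2 * ξ < (a * f + b * g).weightedOrder w := by
  set fξ := weightedHomogeneousComponent w ξ f
  set gξ := weightedHomogeneousComponent w ξ g
  set k := (min (a.weightedOrder w) (b.weightedOrder w)).toNat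
  have hk : (k : ℕ∞) = min (a.weightedOrder w) (b.weightedOrder w) :=
    ENat.natCast_toNat (min_lt_iff.mpr (Or.inl (lt_top_iff_ne_top.mpr
      ((weightedOrder_eq_top_iff w).not.mpr ha)))).ne
  have hka : (k : ℕ∞) ≤ a.weightedOrder w := hk ▸ min_le_left _ _
  have hkb : (k : ℕ∞) ≤ b.weightedOrder w := hk ▸ min_le_right _ _
  set x := weightedHomogeneousComponent w k a
  set y := weightedHomogeneousComponent w k b
  have hcomp : weightedHomogeneousComponent w (k + ξ) (a * f + b * g) = x * fξ + y * gξ := by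
    rw [map_add, weightedHomogeneousComponent_mul_of_le_weightedOrder hka hf.ge,
      weightedHomogeneousComponent_mul_of_le_weightedOrder hkb hg.ge]
  have hle : ((k + ξ : ℕ) : ℕ∞) ≤ (a * f + b * g).weightedOrder w :=
    add_le_weightedOrder_mul_add_mul hka hkb hf.ge hg.ge
  have hxy : x * fξ + y * gξ = 0 := by
    by_contra hne
    refine hS _ (weightedOrder_eq_of_weightedHomogeneousComponent_ne_zero hle (hcomp ▸ hne)) ?_
    rw [hcomp]
    exact Ideal.mem_span_pair.mpr ⟨x, y, rfl⟩
  have hfξ : fξ ≠ 0 := weightedHomogeneousComponent_of_weightedOrder hf.symm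
  have hgξ : gξ ≠ 0 := weightedHomogeneousComponent_of_weightedOrder hg.symm
  -- `IsWeightedHomogeneous` unfolds to `∀ {d}, …`; `@` below stops Lean instantiating `d`
  have hhom (h : MvPowerSeries σ R) (p : ℕ) :
      (weightedHomogeneousComponent w p h).IsWeightedHomogeneous w p :=
    isWeightedHomogeneous_weightedHomogeneousComponent w h p
  have hξk : ξ ≤ k := by
    rcases min_choice (a.weightedOrder w) (b.weightedOrder w) with hmin | hmin
    · exact le_of_mul_add_mul_eq_zero hw (@hhom f ξ) hfξ (@hhom g ξ) hgξ (@hhom a k)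
        (weightedHomogeneousComponent_of_weightedOrder (hk.trans hmin)) (@hhom b k) hcop hxy
    · exact le_of_mul_add_mul_eq_zero hw (@hhom g ξ) hgξ (@hhom f ξ) hfξ (@hhom b k)
        (weightedHomogeneousComponent_of_weightedOrder (hk.trans hmin)) (@hhom a k)
        (fun D h1 h2 => hcop D h2 h1) (by rw [add_comm]; exact hxy)
  have hlt : ((k + ξ : ℕ) : ℕ∞) < (a * f + b * g).weightedOrder w :=
    hle.lt_of_ne fun h => weightedHomogeneousComponent_of_weightedOrder h (hcomp.trans hxy)
  exact ⟨le_trans (by exact_mod_cast hξk) hka, le_trans (by exact_mod_cast hξk) hkb,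
    lt_of_le_of_lt (by exact_mod_cast (by omega : 2 * ξ ≤ k + ξ)) hlt⟩

end MvPowerSeries

section InitialPart

variable {n : ℕ} {R : Type*} [CommRing R] (v : Fin n → ℕ)

theorem wdeg_eq_weight (α : Fin n →₀ ℕ) : wdeg v α = Finsupp.weight v α := by
  simp [wdeg, Finsupp.weight_apply, Finsupp.sum_fintype, mul_comm]

theorem vord_eq_weightedOrder {F : MvPowerSeries (Fin n) R} (hF : F ≠ 0) :
    (vord v F : ℕ∞) = F.weightedOrder v := by
  have hne : {w | ∃ α, MvPowerSeries.coeff α F ≠ 0 ∧ wdeg v α = w}.Nonempty := by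
    obtain ⟨α, hα⟩ := (MvPowerSeries.ne_zero_iff_exists_coeff_ne_zero F).mp hF
    exact ⟨wdeg v α, α, hα, rfl⟩
  obtain ⟨α, hα, hαv⟩ := Nat.sInf_mem hne
  refine ((MvPowerSeries.weightedOrder_eq_nat v).mpr
    ⟨⟨α, hα, by rw [← wdeg_eq_weight, hαv]; rfl⟩, fun β hβ => ?_⟩).symm
  by_contra h
  exact (Nat.sInf_le ⟨β, h, rfl⟩ : vord v F ≤ wdeg v β).not_gt (by rwa [wdeg_eq_weight])

theorem initPart_eq_weightedHomogeneousComponent (F : MvPowerSeries (Fin n) R) :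
    initPart v F = MvPowerSeries.weightedHomogeneousComponent v (vord v F) F := by
  ext α
  rw [MvPowerSeries.coeff_weightedHomogeneousComponent, ← wdeg_eq_weight]
  rfl

variable {v}

theorem wdeg_eq_vord_of_coeff_initPart_ne_zero {F : MvPowerSeries (Fin n) R}
    {α : Fin n →₀ ℕ} (h : MvPowerSeries.coeff α (initPart v F) ≠ 0) : wdeg v α = vord v F := by
  by_contra hne
  exact h (if_neg hne)

theorem ne_zero_of_coeff_initPart_ne_zero {F : MvPowerSeries (Fin n) R} {α : Fin n →₀ ℕ}
    (h : MvPowerSeries.coeff α (initPart v F) ≠ 0) : F ≠ 0 := by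
  rintro rfl
  rw [initPart_eq_weightedHomogeneousComponent, map_zero, map_zero] at h
  exact h rfl

end InitialPart

theorem stmt_3 (R : Type*) [CommRing R] [IsDomain R] [UniqueFactorizationMonoid R]
    (n : ℕ) (F G A B : MvPowerSeries (Fin n) R) (hF : F ≠ 0) (hG : G ≠ 0)
    (hA : A ≠ 0) (hB : B ≠ 0)
    (v : Fin n → ℕ) (hv : ∀ i, 0 < v i) (ξ : ℕ)
    (hξF : vord v F = ξ) (hξG : vord v G = ξ)
    (hcop : ∀ D : MvPowerSeries (Fin n) R,
      D ∣ initPart v F → D ∣ initPart v G → IsUnit D)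
    (hmon : ∀ H ∈ Ideal.span {initPart v F, initPart v G}, ¬ IsMon H)
    (α : Fin n →₀ ℕ) (c : R) (hc : c ≠ 0) (t : ℕ) (ht : wdeg v α = t)
    (hrel : initPart v (A * F + B * G) = MvPowerSeries.monomial α c) :
    ξ ≤ vord v A ∧ ξ ≤ vord v B ∧ 2 * ξ < t := by
  simp only [initPart_eq_weightedHomogeneousComponent, hξF, hξG] at hcop hmon
  have hαS : MvPowerSeries.coeff α (initPart v (A * F + B * G)) ≠ 0 := by
    rwa [hrel, MvPowerSeries.coeff_monomial_same]
  have hS0 : A * F + B * G ≠ 0 := ne_zero_of_coeff_initPart_ne_zero hαS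
  have hinit : ∀ m : ℕ, (A * F + B * G).weightedOrder v = m →
      MvPowerSeries.weightedHomogeneousComponent v m (A * F + B * G) ∉
        Ideal.span {MvPowerSeries.weightedHomogeneousComponent v ξ F,
          MvPowerSeries.weightedHomogeneousComponent v ξ G} := by
    intro m hm hmem
    have hvS : vord v (A * F + B * G) = m := by
      exact_mod_cast (vord_eq_weightedOrder v hS0).trans hm
    rw [← hvS, ← initPart_eq_weightedHomogeneousComponent, hrel] at hmem
    exact hmon _ hmem ⟨α, c, hc, rfl⟩
  obtain ⟨hξA, hξB, hξS⟩ :=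
    MvPowerSeries.le_weightedOrder_of_weightedHomogeneousComponent_notMem_span
      (fun i => (hv i).ne') (hξF ▸ (vord_eq_weightedOrder v hF).symm)
      (hξG ▸ (vord_eq_weightedOrder v hG).symm) hA hcop hinit
  rw [← vord_eq_weightedOrder v hA] at hξA
  rw [← vord_eq_weightedOrder v hB] at hξB
  rw [← vord_eq_weightedOrder v hS0, ← wdeg_eq_vord_of_coeff_initPart_ne_zero hαS, ht] at hξS
  exact ⟨by exact_mod_cast hξA, by exact_mod_cast hξB, by exact_mod_cast hξS⟩
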